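/- arXiv:1703.00038 — 3 statements merged into one kernel-verified Lean document; each statement's English description precedes it below -/
import Mathlib

section
/- (Galois) If a quadratic irrational has the purely periodic continued fraction expansion α = [\overline{b₁, …, b_l}] (bⱼ ≥ 1 integers, the block repeating forever), then its conjugate is ᾱ = −[0; \overline{b_l, b_{l−1}, …, b₁}] = −1/[\overline{b_l, b_{l−1}, …, b₁}], the period being reversed. -/
open Filter

noncomputable section

/-- Continued fraction numerators: `cfNum c (n+1) = pₙ` with `p₋₁ = 1`, `p₀ = c 0`,
`pₙ = cₙ pₙ₋₁ + pₙ₋₂`. -/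
def cfNum (c : ℕ → ℤ) : ℕ → ℤ
  | 0 => 1
  | 1 => c 0
  | n + 2 => c (n + 1) * cfNum c (n + 1) + cfNum c n

/-- Continued fraction denominators: `cfDen c (n+1) = qₙ` with `q₋₁ = 0`, `q₀ = 1`,
`qₙ = cₙ qₙ₋₁ + qₙ₋₂`. -/
def cfDen (c : ℕ → ℤ) : ℕ → ℤ
  | 0 => 0
  | 1 => 1
  | n + 2 => c (n + 1) * cfDen c (n + 1) + cfDen c n

/-- The `n`-th convergent `pₙ/qₙ` of the continued fraction with partial quotients `c`. -/
def cfConv (c : ℕ → ℤ) (n : ℕ) : ℝ := (cfNum c (n + 1) : ℝ) / (cfDen c (n + 1) : ℝ)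

/-- The Gauss map iterates of `α`. -/
def cfXi (α : ℝ) : ℕ → ℝ
  | 0 => α
  | n + 1 => 1 / Int.fract (cfXi α n)

/-- The `n`-th partial quotient of `α`. -/
def cfA (α : ℝ) (n : ℕ) : ℤ := ⌊cfXi α n⌋

/-!
Let `M = cfStep b₀ * ⋯ * cfStep b_{l-1}`, where `cfStep t = !![t, 1; 1, 0]`. Pure periodicity
makes the Gauss map return to `α` after one period, so `α` is a fixed point of the linear
fractional map of `M`. The limit `β` of the reversed expansion is a fixed point of the map of the
reversed product, which is `Mᵀ` because every `cfStep t` is symmetric, and a fixed point `β` of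
`Mᵀ` yields the fixed point `-1/β` of `M`. Thus `α > 0` and `-1/β < 0` are the two roots of the
fixed-point quadratic of `M`. As `α` is irrational, this quadratic is proportional to
`qa X² + qh X + qb`, so its root `α' ≠ α` is `-1/β`.
-/

open scoped Matrix

def cfStep (t : ℤ) : Matrix (Fin 2) (Fin 2) ℤ := !![t, 1; 1, 0]

/-- `!![pₙ, pₙ₋₁; qₙ, qₙ₋₁]`, which is `cfStep (c 0) * ⋯ * cfStep (c n)`. -/
def cfMatrix (c : ℕ → ℤ) (n : ℕ) : Matrix (Fin 2) (Fin 2) ℤ :=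
  !![cfNum c (n + 1), cfNum c n; cfDen c (n + 1), cfDen c n]

/-- `x = (M₀₀ y + M₀₁) / (M₁₀ y + M₁₁)`, with the denominator cleared. -/
def LinFracEq (M : Matrix (Fin 2) (Fin 2) ℤ) (x y : ℝ) : Prop :=
  x * (M 1 0 * y + M 1 1) = M 0 0 * y + M 0 1

section Continuants

variable {c : ℕ → ℤ}

lemma cfDen_nonneg (hc : ∀ n, 0 ≤ c (n + 1)) : ∀ n, 0 ≤ cfDen c n
  | 0 => le_rfl
  | 1 => zero_le_one
  | n + 2 => by
    have := cfDen_nonneg hc n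
    have := cfDen_nonneg hc (n + 1)
    have := hc n
    simp only [cfDen]
    positivity

lemma one_le_cfDen (hc : ∀ n, 1 ≤ c (n + 1)) : ∀ n, 1 ≤ cfDen c (n + 1)
  | 0 => le_rfl
  | n + 1 => by
    have := cfDen_nonneg (fun n => zero_le_one.trans (hc n)) n
    have := one_le_cfDen hc n
    have := hc n
    simp only [cfDen]
    nlinarith

lemma natCast_le_cfDen (hc : ∀ n, 1 ≤ c (n + 1)) : ∀ n : ℕ, (n : ℤ) ≤ cfDen c (n + 1)
  | 0 => zero_le_one
  | 1 => by simpa [cfDen] using hc 0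
  | n + 2 => by
    have := natCast_le_cfDen hc (n + 1)
    have := one_le_cfDen hc n
    have := one_le_cfDen hc (n + 1)
    have := hc (n + 1)
    simp only [cfDen] at *
    push_cast at *
    nlinarith

lemma cfDen_le_cfNum (h0 : 1 ≤ c 0) (hc : ∀ n, 0 ≤ c (n + 1)) : ∀ n, cfDen c n ≤ cfNum c n
  | 0 => zero_le_one
  | 1 => h0
  | n + 2 => by
    have := cfDen_le_cfNum h0 hc n
    have := cfDen_le_cfNum h0 hc (n + 1)
    have := hc n
    simp only [cfNum, cfDen]
    nlinarith

lemma cfStep_transpose (t : ℤ) : (cfStep t)ᵀ = cfStep t := by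
  ext i j; fin_cases i <;> fin_cases j <;> rfl

lemma cfMatrix_zero (c : ℕ → ℤ) : cfMatrix c 0 = cfStep (c 0) := by
  simp [cfMatrix, cfStep, cfNum, cfDen]

lemma cfMatrix_succ (c : ℕ → ℤ) (n : ℕ) :
    cfMatrix c (n + 1) = cfMatrix c n * cfStep (c (n + 1)) := by
  simp only [cfMatrix, cfStep, Matrix.mul_fin_two, cfNum, cfDen]
  congr 1; ring_nf

lemma cfMatrix_add (c : ℕ → ℤ) (m : ℕ) : ∀ n,
    cfMatrix c (m + 1 + n) = cfMatrix c m * cfMatrix (fun i => c (m + 1 + i)) n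
  | 0 => by rw [cfMatrix_zero, cfMatrix_succ]
  | n + 1 => by rw [← add_assoc, cfMatrix_succ, cfMatrix_add c m n, cfMatrix_succ, mul_assoc]; rfl

lemma cfMatrix_reverse : ∀ (n : ℕ) (c d : ℕ → ℤ), (∀ i ≤ n, d i = c (n - i)) →
    cfMatrix d n = (cfMatrix c n)ᵀ
  | 0, c, d, h => by
    rw [cfMatrix_zero, cfMatrix_zero, h 0 le_rfl, cfStep_transpose]
  | n + 1, c, d, h => by
    have hrest : cfMatrix (fun i => d (0 + 1 + i)) n = (cfMatrix c n)ᵀ :=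
      cfMatrix_reverse n c _ fun i hi => by rw [h _ (by omega)]; congr 1; omega
    have hsplit := cfMatrix_add d 0 n
    rw [zero_add, add_comm, hrest, cfMatrix_zero] at hsplit
    rw [hsplit, cfMatrix_succ, Matrix.transpose_mul, h 0 (Nat.zero_le _), Nat.sub_zero,
      cfStep_transpose]

lemma det_cfMatrix (c : ℕ → ℤ) : ∀ n, (cfMatrix c n).det = (-1) ^ (n + 1)
  | 0 => by simp [cfMatrix_zero, cfStep]
  | n + 1 => by
    rw [cfMatrix_succ, Matrix.det_mul, det_cfMatrix c n]
    simp [cfStep, pow_succ]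

end Continuants

namespace LinFracEq

variable {M N : Matrix (Fin 2) (Fin 2) ℤ} {x y z : ℝ}

lemma mul (hxy : LinFracEq M x y) (hyz : LinFracEq N y z) : LinFracEq (M * N) x z := by
  unfold LinFracEq at *
  simp only [Matrix.mul_apply, Fin.sum_univ_two, Int.cast_add, Int.cast_mul]
  linear_combination (N 1 0 * z + N 1 1 : ℝ) * hxy - (x * M 1 0 - M 0 0 : ℝ) * hyz

lemma div_sub_eq (h : LinFracEq M x y) (hM : (M 1 0 : ℝ) ≠ 0)
    (hy : (M 1 0 * y + M 1 1 : ℝ) ≠ 0) :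
    (M 0 0 / M 1 0 : ℝ) - x = M.det / (M 1 0 * (M 1 0 * y + M 1 1)) := by
  have hx : x = (M 0 0 * y + M 0 1) / (M 1 0 * y + M 1 1) := by rw [← h]; field_simp
  rw [hx, Matrix.det_fin_two]
  push_cast
  field_simp
  ring

lemma neg_inv_of_transpose (h : LinFracEq Mᵀ x x) (hx : x ≠ 0) :
    LinFracEq M (-1 / x) (-1 / x) := by
  unfold LinFracEq at *
  simp only [Matrix.transpose_apply] at h
  field_simp
  linear_combination -h

lemma quadratic (h : LinFracEq M x x) :
    ((M 1 0 : ℤ) : ℝ) * x ^ 2 + ((M 1 1 - M 0 0 : ℤ) : ℝ) * x + ((-M 0 1 : ℤ) : ℝ) = 0 := by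
  unfold LinFracEq at h
  push_cast
  linear_combination h

lemma of_tendsto {ι : Type*} {l : Filter ι} [l.NeBot] {u v : ι → ℝ}
    (h : ∀ i, LinFracEq M (u i) (v i)) (hu : Tendsto u l (nhds x)) (hv : Tendsto v l (nhds y)) :
    LinFracEq M x y := by
  exact tendsto_nhds_unique ((hu.mul ((hv.const_mul _).add_const _)).congr h)
    ((hv.const_mul _).add_const _)

end LinFracEq

lemma linFracEq_div_of_mul {M N : Matrix (Fin 2) (Fin 2) ℤ} (hN : (N 1 0 : ℝ) ≠ 0)
    (hMN : ((M * N) 1 0 : ℝ) ≠ 0) :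
    LinFracEq M (((M * N) 0 0 : ℤ) / ((M * N) 1 0 : ℤ)) ((N 0 0 : ℤ) / (N 1 0 : ℤ)) := by
  have hden : (M 1 0 * ((N 0 0 : ℤ) / (N 1 0 : ℤ)) + M 1 1 : ℝ) = ((M * N) 1 0 : ℤ) / N 1 0 := by
    simp only [Matrix.mul_apply, Fin.sum_univ_two, Int.cast_add, Int.cast_mul]
    field_simp
  unfold LinFracEq
  rw [hden, div_mul_div_cancel₀ hMN]
  simp only [Matrix.mul_apply, Fin.sum_univ_two, Int.cast_add, Int.cast_mul]
  field_simp

section Convergents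

variable {c : ℕ → ℤ}

lemma cfConv_eq_div (c : ℕ → ℤ) (n : ℕ) :
    cfConv c n = ((cfMatrix c n 0 0 : ℤ) : ℝ) / ((cfMatrix c n 1 0 : ℤ) : ℝ) := by
  simp [cfConv, cfMatrix]

lemma cfDen_succ_pos (hc : ∀ n, 1 ≤ c (n + 1)) (n : ℕ) : (0 : ℝ) < cfDen c (n + 1) := by
  exact_mod_cast one_le_cfDen hc n

lemma linFracEq_cfConv_add (hc : ∀ n, 1 ≤ c (n + 1)) (m n : ℕ) :
    LinFracEq (cfMatrix c m) (cfConv c (m + 1 + n)) (cfConv (fun i => c (m + 1 + i)) n) := by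
  have hN := cfDen_succ_pos (c := fun i => c (m + 1 + i)) (fun i => hc (m + 1 + i)) n
  have hMN : ((cfMatrix c (m + 1 + n) 1 0 : ℤ) : ℝ) ≠ 0 := by
    simpa [cfMatrix] using (cfDen_succ_pos hc (m + 1 + n)).ne'
  rw [cfConv_eq_div, cfConv_eq_div, cfMatrix_add]
  rw [cfMatrix_add] at hMN
  exact linFracEq_div_of_mul (by simpa [cfMatrix] using hN.ne') hMN

lemma dist_cfConv_succ (hc : ∀ n, 1 ≤ c (n + 1)) (n : ℕ) :
    dist (cfConv c n) (cfConv c (n + 1)) = 1 / (cfDen c (n + 1) * cfDen c (n + 2)) := by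
  have h1 := cfDen_succ_pos hc n
  have h2 := cfDen_succ_pos hc (n + 1)
  have hdet : (cfNum c (n + 1 + 1) * cfDen c (n + 1) - cfDen c (n + 1 + 1) * cfNum c (n + 1) : ℝ) =
      (-1) ^ (n + 2) := by
    have := congrArg (Int.cast : ℤ → ℝ) (det_cfMatrix c (n + 1))
    rw [cfMatrix, Matrix.det_fin_two_of] at this
    push_cast at this
    linear_combination this
  rw [dist_comm, Real.dist_eq, cfConv, cfConv, div_sub_div _ _ h2.ne' h1.ne', hdet, abs_div]
  simp only [abs_pow, abs_neg, abs_one, one_pow]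
  rw [abs_of_pos (by positivity), mul_comm]

lemma cauchySeq_cfConv (hc : ∀ n, 1 ≤ c (n + 1)) : CauchySeq (cfConv c) := by
  have hsum : Summable fun n : ℕ => 2 * (1 / ((n + 1 : ℕ) : ℝ) ^ 2) :=
    ((summable_nat_add_iff 1).mpr (Real.summable_one_div_nat_pow.mpr one_lt_two)).mul_left 2
  refine cauchySeq_of_summable_dist (hsum.of_nonneg_of_le (fun _ => dist_nonneg) fun n => ?_)
  have hq₁ : ((n + 1 : ℕ) : ℝ) ≤ 2 * cfDen c (n + 1) := by
    have := natCast_le_cfDen hc n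
    have := one_le_cfDen hc n
    push_cast
    exact_mod_cast (by omega : (n : ℤ) + 1 ≤ 2 * cfDen c (n + 1))
  have hq₂ : ((n + 1 : ℕ) : ℝ) ≤ cfDen c (n + 2) := by exact_mod_cast natCast_le_cfDen hc (n + 1)
  have h₁ := cfDen_succ_pos hc n
  have h₂ := cfDen_succ_pos hc (n + 1)
  rw [dist_cfConv_succ hc, mul_one_div, div_le_div_iff₀ (by positivity) (by positivity)]
  nlinarith

lemma one_le_cfConv (hc : ∀ n, 1 ≤ c n) (n : ℕ) : 1 ≤ cfConv c n := by
  rw [cfConv, one_le_div (cfDen_succ_pos (fun n => hc (n + 1)) n)]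
  exact_mod_cast cfDen_le_cfNum (hc 0) (fun n => zero_le_one.trans (hc (n + 1))) (n + 1)

end Convergents

section GaussMap

variable {x : ℝ}

lemma irrational_cfXi (hx : Irrational x) : ∀ n, Irrational (cfXi x n)
  | 0 => hx
  | n + 1 => by
    rw [cfXi, one_div, Int.fract]
    exact ((irrational_cfXi hx n).sub_intCast _).inv

lemma fract_cfXi_pos (hx : Irrational x) (n : ℕ) : 0 < Int.fract (cfXi x n) :=
  Int.fract_pos.mpr ((irrational_cfXi hx n).ne_int _)

lemma one_lt_cfXi_succ (hx : Irrational x) (n : ℕ) : 1 < cfXi x (n + 1) := by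
  rw [cfXi, one_lt_div (fract_cfXi_pos hx n)]
  exact Int.fract_lt_one _

lemma one_le_cfA_succ (hx : Irrational x) (n : ℕ) : 1 ≤ cfA x (n + 1) :=
  Int.le_floor.mpr (by exact_mod_cast (one_lt_cfXi_succ hx n).le)

lemma cfXi_add (x : ℝ) (l : ℕ) : ∀ n, cfXi x (l + n) = cfXi (cfXi x l) n
  | 0 => rfl
  | n + 1 => by rw [← add_assoc, cfXi, cfXi_add x l n, cfXi]

lemma linFracEq_cfStep_cfXi (hx : Irrational x) (n : ℕ) :
    LinFracEq (cfStep (cfA x n)) (cfXi x n) (cfXi x (n + 1)) := by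
  have hξ : cfXi x (n + 1) = (Int.fract (cfXi x n))⁻¹ := by rw [cfXi, one_div]
  simp only [LinFracEq, cfStep, cfA, hξ]
  simp only [Matrix.of_apply, Matrix.cons_val', Matrix.cons_val_zero, Matrix.cons_val_one,
    Matrix.empty_val', Matrix.cons_val_fin_one, Int.cast_one, Int.cast_zero, one_mul, add_zero]
  nth_rewrite 1 [← Int.floor_add_fract (cfXi x n)]
  rw [add_mul, mul_inv_cancel₀ (fract_cfXi_pos hx n).ne']

lemma linFracEq_cfXi (hx : Irrational x) : ∀ n, LinFracEq (cfMatrix (cfA x) n) x (cfXi x (n + 1))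
  | 0 => by rw [cfMatrix_zero]; exact linFracEq_cfStep_cfXi hx 0
  | n + 1 => by
    rw [cfMatrix_succ]
    exact (linFracEq_cfXi hx n).mul (linFracEq_cfStep_cfXi hx (n + 1))

lemma abs_cfConv_cfA_sub_le (hx : Irrational x) (n : ℕ) :
    |cfConv (cfA x) n - x| ≤ 1 / cfDen (cfA x) (n + 1) := by
  have hc := one_le_cfA_succ hx
  have hq : (1 : ℝ) ≤ cfDen (cfA x) (n + 1) := by exact_mod_cast one_le_cfDen hc n
  have hq' : (0 : ℝ) ≤ cfDen (cfA x) n := by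
    exact_mod_cast cfDen_nonneg (fun n => zero_le_one.trans (hc n)) n
  have hξ := one_lt_cfXi_succ hx n
  have hD : (1 : ℝ) ≤ cfDen (cfA x) (n + 1) * cfXi x (n + 1) + cfDen (cfA x) n := by nlinarith
  have h := (linFracEq_cfXi hx n).div_sub_eq (by simpa [cfMatrix] using (zero_lt_one.trans_le hq).ne')
    (by simp [cfMatrix]; exact (zero_lt_one.trans_le hD).ne')
  rw [← cfConv_eq_div, det_cfMatrix] at h
  simp only [cfMatrix, Matrix.of_apply, Matrix.cons_val', Matrix.cons_val_zero, Matrix.cons_val_one,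
    Matrix.empty_val', Matrix.cons_val_fin_one] at h
  rw [h, abs_div]
  push_cast
  simp only [abs_pow, abs_neg, abs_one, one_pow]
  rw [abs_of_pos (by positivity)]
  exact one_div_le_one_div_of_le (by positivity) (le_mul_of_one_le_right (by positivity) hD)

lemma tendsto_cfConv_cfA (hx : Irrational x) : Tendsto (cfConv (cfA x)) atTop (nhds x) := by
  have hq : Tendsto (fun n : ℕ => (cfDen (cfA x) (n + 1) : ℝ)) atTop atTop :=
    tendsto_atTop_mono (fun n => by exact_mod_cast natCast_le_cfDen (one_le_cfA_succ hx) n)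
      tendsto_natCast_atTop_atTop
  exact tendsto_iff_norm_sub_tendsto_zero.mpr (squeeze_zero (fun _ => norm_nonneg _)
    (abs_cfConv_cfA_sub_le hx) (tendsto_const_nhds.div_atTop hq))

lemma cfXi_eq_self_of_periodic {l : ℕ} (hx : Irrational x) (hper : ∀ n, cfA x (l + n) = cfA x n) :
    cfXi x l = x := by
  have hA : cfA (cfXi x l) = cfA x := funext fun n => by rw [← hper n, cfA, cfA, cfXi_add]
  have h := tendsto_cfConv_cfA (irrational_cfXi hx l)
  rw [hA] at h
  exact tendsto_nhds_unique h (tendsto_cfConv_cfA hx)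

end GaussMap

lemma linFracEq_of_periodic {c : ℕ → ℤ} {k : ℕ} {β : ℝ} (hc : ∀ n, 1 ≤ c (n + 1))
    (hper : ∀ i, c (k + 1 + i) = c i) (hβ : Tendsto (cfConv c) atTop (nhds β)) :
    LinFracEq (cfMatrix c k) β β := by
  have hshift : (fun i => c (k + 1 + i)) = c := funext hper
  have h := linFracEq_cfConv_add hc k
  rw [hshift] at h
  have hβ' : Tendsto (fun n => cfConv c (k + 1 + n)) atTop (nhds β) :=
    (hβ.comp (tendsto_add_atTop_nat (k + 1))).congr fun n => congrArg (cfConv c) (add_comm _ _)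
  exact LinFracEq.of_tendsto h hβ' hβ

lemma quadratic_eq_zero_of_irrational_common_root {α y : ℝ} (hα : Irrational α)
    {a h b a' h' b' : ℤ} (ha : a ≠ 0) (hα₁ : a * α ^ 2 + h * α + b = 0)
    (hα₂ : a' * α ^ 2 + h' * α + b' = 0) (hy : a * y ^ 2 + h * y + b = 0) :
    a' * y ^ 2 + h' * y + b' = 0 := by
  have hlin : ((a' * h - a * h' : ℤ) : ℝ) * α + ((a' * b - a * b' : ℤ) : ℝ) = 0 := by
    push_cast
    linear_combination a' * hα₁ - a * hα₂
  obtain ⟨hu, hv⟩ : a' * h - a * h' = 0 ∧ a' * b - a * b' = 0 := by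
    by_cases hu : a' * h - a * h' = 0
    · rw [hu, Int.cast_zero, zero_mul, zero_add, Int.cast_eq_zero] at hlin
      exact ⟨hu, hlin⟩
    · exact absurd hlin (((hα.intCast_mul hu).add_intCast _).ne_zero)
  have hu' : (a' * h : ℝ) = a * h' := by exact_mod_cast sub_eq_zero.mp hu
  have hv' : (a' * b : ℝ) = a * b' := by exact_mod_cast sub_eq_zero.mp hv
  refine (mul_eq_zero.mp ?_).resolve_left (Int.cast_ne_zero.mpr ha)
  linear_combination a' * hy - y * hu' - hv'

lemma eq_of_quadratic_eq_zero {a h b x y z : ℝ} (ha : a ≠ 0) (hx : a * x ^ 2 + h * x + b = 0)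
    (hy : a * y ^ 2 + h * y + b = 0) (hz : a * z ^ 2 + h * z + b = 0) (hyx : y ≠ x)
    (hzx : z ≠ x) : y = z := by
  have hy' : a * (y + x) + h = 0 :=
    (mul_eq_zero.mp (by linear_combination hy - hx : (y - x) * (a * (y + x) + h) = 0)).resolve_left
      (sub_ne_zero.mpr hyx)
  have hz' : a * (z + x) + h = 0 :=
    (mul_eq_zero.mp (by linear_combination hz - hx : (z - x) * (a * (z + x) + h) = 0)).resolve_left
      (sub_ne_zero.mpr hzx)
  have : a * (y - z) = 0 := by linear_combination hy' - hz'
  exact sub_eq_zero.mp ((mul_eq_zero.mp this).resolve_left ha)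

/-- Here `b j` denotes `b_{j+1}` for `0 ≤ j < l`, so the reversed-period entry at position `m` is
`b (l-1-m%l)`. -/
theorem galois_conjugate_reversed_period (l : ℕ) (b : ℕ → ℤ) (hl : 1 ≤ l)
    (hb : ∀ j, j < l → 1 ≤ b j)
    (α α' : ℝ) (qa qh qb : ℤ) (hqa : qa ≠ 0) (hirr : Irrational α)
    (hroot : (qa : ℝ) * α ^ 2 + (qh : ℝ) * α + (qb : ℝ) = 0)
    (hroot' : (qa : ℝ) * α' ^ 2 + (qh : ℝ) * α' + (qb : ℝ) = 0)
    (hne : α' ≠ α)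
    (hexp : ∀ n, cfA α n = b (n % l)) :
    ∃ β : ℝ, Tendsto (cfConv (fun m => b (l - 1 - m % l))) atTop (nhds β) ∧
      α' = -1 / β := by
  obtain ⟨k, rfl⟩ : ∃ k, l = k + 1 := ⟨l - 1, by omega⟩
  set c : ℕ → ℤ := fun m => b (k + 1 - 1 - m % (k + 1))
  have hc : ∀ n, 1 ≤ c n := fun n => hb _ (by omega)
  have ha : ∀ n, 1 ≤ cfA α n := fun n => hexp n ▸ hb _ (Nat.mod_lt _ k.succ_pos)
  obtain ⟨β, hβ⟩ := cauchySeq_tendsto_of_complete (cauchySeq_cfConv fun n => hc (n + 1))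
  refine ⟨β, hβ, ?_⟩
  set M := cfMatrix (cfA α) k
  have hαM : LinFracEq M α α := by
    have hper : ∀ n, cfA α (k + 1 + n) = cfA α n := fun n => by simp [hexp]
    simpa [cfXi_eq_self_of_periodic hirr hper] using linFracEq_cfXi hirr k
  have hβM : LinFracEq Mᵀ β β := by
    have hrev : cfMatrix c k = Mᵀ := cfMatrix_reverse k _ c fun i hi => by
      simp [c, hexp, Nat.mod_eq_of_lt (show i < k + 1 by omega),
        Nat.mod_eq_of_lt (show k - i < k + 1 by omega)]
    exact hrev ▸ linFracEq_of_periodic (fun n => hc (n + 1)) (fun i => by simp [c]) hβ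
  have hβ0 : 0 < β := zero_lt_one.trans_le (ge_of_tendsto' hβ (one_le_cfConv hc))
  have hα0 : 0 < α := by
    have : (1 : ℝ) ≤ ⌊α⌋ := by exact_mod_cast ha 0
    linarith [Int.floor_le α]
  have hM : (M 1 0 : ℝ) ≠ 0 := by
    simpa [M, cfMatrix] using (cfDen_succ_pos (fun n => ha (n + 1)) k).ne'
  refine eq_of_quadratic_eq_zero hM hαM.quadratic
    (quadratic_eq_zero_of_irrational_common_root hirr hqa hroot hαM.quadratic hroot')
    (hβM.neg_inv_of_transpose hβ0.ne').quadratic hne ?_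
  exact ((div_neg_of_neg_of_pos (by norm_num) hβ0).trans hα0).ne
end
end

section
/- Let a, h, b be real numbers with a ≠ 0 and let c = a+h+b. Suppose the quadratic aX²+hX+b has two real roots α, ᾱ. Then the following are equivalent: (i) one of the roots is > 1 and the other lies in the open interval (−1, 0); (ii) ab < 0, ac < 0, and a(2a+2b−c) > 0 (equivalently a(a−h+b) > 0). (For an integer binary quadratic form Q(x,y)=ax²+hxy+by², condition (ii) reads Q(1,0)Q(0,1) < 0, Q(1,0)Q(1,1) < 0, Q(1,0)Q(1,−1) > 0, and by Galois' theorem (i) characterizes the forms whose dominant root has purely periodic continued fraction, i.e. the Galois forms.) -/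
/-- For real `a ≠ 0`, `h`, `b` with `c = a + h + b`, if the quadratic
`aX² + hX + b` has two real roots `α, ᾱ`, then: one of the roots is `> 1` and the other lies
in `(-1, 0)` if and only if `ab < 0`, `ac < 0` and `a(2a + 2b - c) > 0`. -/
theorem galois_form_characterization (a h b α β : ℝ) (ha : a ≠ 0)
    (hroot : a * α ^ 2 + h * α + b = 0) (hroot' : a * β ^ 2 + h * β + b = 0)
    (hne : α ≠ β) :
    ((1 < α ∧ -1 < β ∧ β < 0) ∨ (1 < β ∧ -1 < α ∧ α < 0)) ↔
      (a * b < 0 ∧ a * (a + h + b) < 0 ∧ a * (2 * a + 2 * b - (a + h + b)) > 0) := by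
  have hd : α - β ≠ 0 := sub_ne_zero.mpr hne
  have hh : h = -(a * (α + β)) := by
    have h0 : (α - β) * (h + a * (α + β)) = 0 := by nlinarith [hroot, hroot']
    rcases mul_eq_zero.mp h0 with h1 | h1
    · exact absurd h1 hd
    · linarith
  subst hh
  have hb : b = a * (α * β) := by linear_combination hroot
  subst hb
  have ha2 : 0 < a ^ 2 := by positivity
  constructor
  · rintro (⟨h1, h2, h3⟩ | ⟨h1, h2, h3⟩) <;>
    · have e1 : α * β < 0 := by nlinarith
      have e2 : (1 - α) * (1 - β) < 0 := by nlinarith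
      have e3 : (1 + α) * (1 + β) > 0 := by nlinarith
      refine ⟨?_, ?_, ?_⟩
      · nlinarith [mul_pos ha2 (neg_pos.mpr e1)]
      · nlinarith [mul_pos ha2 (neg_pos.mpr e2)]
      · nlinarith [mul_pos ha2 e3]
  · rintro ⟨h1, h2, h3⟩
    have hαβ : α * β < 0 := by
      by_contra hc; push_neg at hc
      nlinarith [mul_nonneg ha2.le hc]
    have h2' : (1 - α) * (1 - β) < 0 := by
      by_contra hc; push_neg at hc
      nlinarith [mul_nonneg ha2.le hc]
    have h3' : (1 + α) * (1 + β) > 0 := by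
      by_contra hc; push_neg at hc
      nlinarith [mul_nonneg ha2.le (neg_nonneg.mpr hc)]
    rcases mul_neg_iff.mp hαβ with ⟨hp, hq⟩ | ⟨hp, hq⟩
    · left
      refine ⟨?_, ?_, hq⟩ <;> nlinarith
    · right
      refine ⟨?_, ?_, hp⟩ <;> nlinarith
end

section
/- Let Q(x,y) = ax² + hxy + by² be a binary quadratic form with real coefficients a ≥ 1, h ≥ 1, b ≥ 1, and let A = (p q; r s) be a matrix with nonnegative integer entries and ps − qr = 1. Let a' = ap² + hpr + br², h' = 2apq + h(ps+qr) + 2brs, b' = aq² + hqs + bs² be the coefficients of the transformed form Q'(x,y) = Q(px+qy, rx+sy). Then a', h', b' are all positive and max(a', h', b') ≥ (r+s)²/4. -/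
/-- For a real binary quadratic form `Q = ax² + hxy + by²` with `a, h, b ≥ 1`
and a matrix `A = (p q; r s)` with nonnegative integer entries and `ps - qr = 1`, the
coefficients `a', h', b'` of the transformed form `Q'(x,y) = Q(px+qy, rx+sy)` are all
positive and `max(a', h', b') ≥ (r+s)²/4`. -/
theorem transformed_form_lower_bound (a h b : ℝ) (ha : 1 ≤ a) (hh : 1 ≤ h) (hb : 1 ≤ b)
    (p q r s : ℤ) (hp : 0 ≤ p) (hq : 0 ≤ q) (hr : 0 ≤ r) (hs : 0 ≤ s)
    (hdet : p * s - q * r = 1) :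
    0 < a * (p : ℝ) ^ 2 + h * (p : ℝ) * (r : ℝ) + b * (r : ℝ) ^ 2 ∧
    0 < 2 * a * (p : ℝ) * (q : ℝ) + h * ((p : ℝ) * (s : ℝ) + (q : ℝ) * (r : ℝ)) +
          2 * b * (r : ℝ) * (s : ℝ) ∧
    0 < a * (q : ℝ) ^ 2 + h * (q : ℝ) * (s : ℝ) + b * (s : ℝ) ^ 2 ∧
    ((r : ℝ) + (s : ℝ)) ^ 2 / 4 ≤
      max (a * (p : ℝ) ^ 2 + h * (p : ℝ) * (r : ℝ) + b * (r : ℝ) ^ 2)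
        (max (2 * a * (p : ℝ) * (q : ℝ) + h * ((p : ℝ) * (s : ℝ) + (q : ℝ) * (r : ℝ)) +
                2 * b * (r : ℝ) * (s : ℝ))
             (a * (q : ℝ) ^ 2 + h * (q : ℝ) * (s : ℝ) + b * (s : ℝ) ^ 2)) := by
  have hps : (1 : ℤ) ≤ p * s := by nlinarith [mul_nonneg hq hr]
  have hp1 : (1 : ℤ) ≤ p := by
    rcases hp.eq_or_lt with h' | h'
    · exfalso; rw [← h'] at hps; simp at hps
    · omega
  have hs1 : (1 : ℤ) ≤ s := by
    rcases hs.eq_or_lt with h' | h'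
    · exfalso; rw [← h'] at hps; simp at hps
    · omega
  have hpR : (1 : ℝ) ≤ (p : ℝ) := by exact_mod_cast hp1
  have hsR : (1 : ℝ) ≤ (s : ℝ) := by exact_mod_cast hs1
  have hqR : (0 : ℝ) ≤ (q : ℝ) := by exact_mod_cast hq
  have hrR : (0 : ℝ) ≤ (r : ℝ) := by exact_mod_cast hr
  have hpR0 : (0 : ℝ) ≤ (p : ℝ) := by linarith
  have hsR0 : (0 : ℝ) ≤ (s : ℝ) := by linarith
  have hA : 0 < a * (p : ℝ) ^ 2 + h * (p : ℝ) * (r : ℝ) + b * (r : ℝ) ^ 2 := by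
    nlinarith [mul_nonneg hpR0 hrR, sq_nonneg (r : ℝ)]
  have hB : 0 < 2 * a * (p : ℝ) * (q : ℝ) + h * ((p : ℝ) * (s : ℝ) + (q : ℝ) * (r : ℝ)) +
      2 * b * (r : ℝ) * (s : ℝ) := by
    nlinarith [mul_nonneg hpR0 hqR, mul_nonneg hrR hsR0, mul_nonneg hqR hrR,
      mul_le_mul hpR hsR zero_le_one hpR0]
  have hC : 0 < a * (q : ℝ) ^ 2 + h * (q : ℝ) * (s : ℝ) + b * (s : ℝ) ^ 2 := by
    nlinarith [mul_nonneg hqR hsR0, sq_nonneg (q : ℝ)]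
  refine ⟨hA, hB, hC, ?_⟩
  have hAr : (r : ℝ) ^ 2 ≤ a * (p : ℝ) ^ 2 + h * (p : ℝ) * (r : ℝ) + b * (r : ℝ) ^ 2 := by
    nlinarith [mul_nonneg hpR0 hrR, sq_nonneg (p : ℝ), sq_nonneg (r : ℝ)]
  have hCs : (s : ℝ) ^ 2 ≤ a * (q : ℝ) ^ 2 + h * (q : ℝ) * (s : ℝ) + b * (s : ℝ) ^ 2 := by
    nlinarith [mul_nonneg hqR hsR0, sq_nonneg (q : ℝ), sq_nonneg (s : ℝ)]
  rcases le_total (r : ℝ) (s : ℝ) with hle | hle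
  · refine le_trans ?_ (le_max_of_le_right (le_max_of_le_right hCs))
    nlinarith
  · refine le_trans ?_ (le_max_left _ _)
    nlinarith
end
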